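/- arXiv:1405.5551 — 3 statements merged into one kernel-verified Lean document; each statement's English description precedes it below -/
import Mathlib

section
/- Let A be a unital Banach algebra and x ∈ A accretive (numerical range in the closed right half plane). Then 1 + x is invertible and ‖1 − x(1+x)^{-1}‖ ≤ 1. -/
/-!
If `y * (1 + x) = 1` and `g` is a Hahn–Banach functional norming `y`, then
`φ a = g (y * a) / ‖y‖` is a state with `‖y‖ * Re φ x = Re g 1 - ‖y‖ ≤ 1 - ‖y‖`, so
accretivity of `x` forces `‖y‖ ≤ 1` (the Stampfli–Williams estimate at `λ = -1`).
Since every `t • x` with `t ≥ 0` is accretive, the inverses of `1 + t • x` are uniformly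
bounded by `1`, so invertibility spreads from `t = 0` to `t = 1` in steps of length
`1 / N` with `‖x‖ < N`. Finally `1 - x (1 + x)⁻¹ = (1 + x)⁻¹`.
-/

section

variable {A : Type*} [NormedRing A] [NormedAlgebra ℂ A]

def IsAccretive (x : A) : Prop :=
  ∀ φ : StrongDual ℂ A, ‖φ‖ = 1 → φ 1 = 1 → 0 ≤ (φ x).re

theorem IsAccretive.ofReal_smul {x : A} (hx : IsAccretive x) {t : ℝ} (ht : 0 ≤ t) :
    IsAccretive ((t : ℂ) • x) := fun φ hφ hφ1 ↦ by
  rw [map_smul, smul_eq_mul, Complex.re_ofReal_mul]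
  exact mul_nonneg ht (hx φ hφ hφ1)

theorem exists_state_mul_left_eq [NormOneClass A] {y : A} (hy : y ≠ 0) :
    ∃ g φ : StrongDual ℂ A, ‖g‖ = 1 ∧ g y = ‖y‖ ∧ ‖φ‖ = 1 ∧ φ 1 = 1 ∧
      ∀ a, (‖y‖ : ℂ) * φ a = g (y * a) := by
  obtain ⟨g, hg, hgy⟩ := exists_dual_vector ℂ y (norm_ne_zero_iff.mpr hy)
  have hy₀ : (‖y‖ : ℂ) ≠ 0 := by exact_mod_cast norm_ne_zero_iff.mpr hy
  set φ : StrongDual ℂ A := (‖y‖ : ℂ)⁻¹ • g.comp (ContinuousLinearMap.mul ℂ A y)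
  have hφ_apply (a : A) : (‖y‖ : ℂ) * φ a = g (y * a) := by
    simp [φ, hy₀]
  have hφ1 : φ 1 = 1 := by
    simpa [hgy, hy₀] using hφ_apply 1
  have hφ_le : ‖φ‖ ≤ 1 := by
    calc ‖φ‖ = ‖y‖⁻¹ * ‖g.comp (ContinuousLinearMap.mul ℂ A y)‖ := by
          rw [norm_smul, norm_inv, Complex.norm_real, norm_norm]
      _ ≤ ‖y‖⁻¹ * (‖g‖ * ‖ContinuousLinearMap.mul ℂ A y‖) := by
          gcongr
          exact g.opNorm_comp_le _
      _ ≤ ‖y‖⁻¹ * (1 * ‖y‖) := by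
          gcongr
          · exact hg.le
          · exact ContinuousLinearMap.opNorm_mul_apply_le ℂ A y
      _ = 1 := by field_simp [norm_ne_zero_iff.mpr hy]
  have hφ_ge : 1 ≤ ‖φ‖ := by simpa [hφ1] using φ.le_opNorm 1
  exact ⟨g, φ, hg, hgy, le_antisymm hφ_le hφ_ge, hφ1, hφ_apply⟩

theorem IsAccretive.norm_le_one_of_mul_one_add_eq_one [NormOneClass A] {x y : A}
    (hx : IsAccretive x) (hy : y * (1 + x) = 1) : ‖y‖ ≤ 1 := by
  rcases eq_or_ne y 0 with rfl | hy₀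
  · simp
  obtain ⟨g, φ, hg, hgy, hφ, hφ1, hφ_apply⟩ := exists_state_mul_left_eq hy₀
  have hyx : y * x = 1 - y := by rw [← hy]; noncomm_ring
  have key : (‖y‖ : ℂ) * φ x = g 1 - ‖y‖ := by rw [hφ_apply, hyx, map_sub, hgy]
  have hre : ‖y‖ * (φ x).re = (g 1).re - ‖y‖ := by simpa using congrArg Complex.re key
  have hg1 : (g 1).re ≤ 1 := (Complex.re_le_norm _).trans (by simpa [hg] using g.le_opNorm 1)
  nlinarith [hx φ hφ hφ1, norm_nonneg y]

end

theorem Units.isUnit_add_of_norm_inv_le_one {R : Type*} [NormedRing R] [HasSummableGeomSeries R]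
    (u : Rˣ) (hu : ‖(↑u⁻¹ : R)‖ ≤ 1) {t : R} (ht : ‖t‖ < 1) : IsUnit (↑u + t) := by
  nontriviality R
  exact (u.add t (ht.trans_le ((one_le_inv₀ (Units.norm_pos u⁻¹)).mpr hu))).isUnit

section

variable {A : Type*} [NormedRing A] [NormedAlgebra ℂ A] [NormOneClass A] [CompleteSpace A]

theorem IsAccretive.isUnit_one_add_smul {x : A} (hx : IsAccretive x) {N : ℕ} (hN : ‖x‖ < N)
    (n : ℕ) : IsUnit (1 + ((n / N : ℝ) : ℂ) • x) := by
  induction n with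
  | zero => simp
  | succ n ih =>
    obtain ⟨u, hu⟩ := ih
    have hN₀ : (0 : ℝ) < N := (norm_nonneg x).trans_lt hN
    have hinv : ‖(↑u⁻¹ : A)‖ ≤ 1 :=
      (hx.ofReal_smul (by positivity)).norm_le_one_of_mul_one_add_eq_one (hu ▸ u.inv_mul)
    have hstep : ‖((1 / N : ℝ) : ℂ) • x‖ < 1 := by
      rw [norm_smul, Complex.norm_real, Real.norm_of_nonneg (by positivity), one_div,
        inv_mul_lt_iff₀ hN₀, mul_one]
      exact hN
    convert u.isUnit_add_of_norm_inv_le_one hinv hstep using 1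
    rw [hu, add_assoc, ← add_smul, ← Complex.ofReal_add]
    push_cast
    ring_nf

theorem IsAccretive.isUnit_one_add {x : A} (hx : IsAccretive x) : IsUnit (1 + x) := by
  have hN : ‖x‖ < (⌈‖x‖⌉₊ + 1 : ℕ) := by push_cast; linarith [Nat.le_ceil ‖x‖]
  have hN₀ : ((⌈‖x‖⌉₊ + 1 : ℕ) : ℝ) ≠ 0 := by positivity
  have h := hx.isUnit_one_add_smul hN (⌈‖x‖⌉₊ + 1)
  rwa [div_self hN₀, Complex.ofReal_one, one_smul] at h

end

/-- Let `A` be a unital Banach algebra and `x ∈ A` accretive (numerical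
range in the closed right half plane).  Then `1 + x` is invertible and
`‖1 − x(1+x)⁻¹‖ ≤ 1`. -/
theorem accretive_one_add_invertible_and_Ftransform_mem_FSet
    {A : Type*} [NormedRing A] [NormedAlgebra ℂ A] [NormOneClass A] [CompleteSpace A]
    (x : A)
    (hacc : ∀ φ : StrongDual ℂ A, ‖φ‖ = 1 → φ 1 = 1 → 0 ≤ (φ x).re) :
    ∃ y : A, (1 + x) * y = 1 ∧ y * (1 + x) = 1 ∧ ‖1 - x * y‖ ≤ 1 := by
  have hx : IsAccretive x := hacc
  obtain ⟨u, hu⟩ := hx.isUnit_one_add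
  have hright : (1 + x) * ↑u⁻¹ = 1 := hu ▸ u.mul_inv
  have hleft : ↑u⁻¹ * (1 + x) = 1 := hu ▸ u.inv_mul
  refine ⟨↑u⁻¹, hright, hleft, ?_⟩
  have hF : 1 - x * ↑u⁻¹ = ↑u⁻¹ := by rw [← hright]; noncomm_ring
  rw [hF]
  exact hx.norm_le_one_of_mul_one_add_eq_one hleft
end

section
/- Let A be a unital Banach algebra with a closed subalgebra B (not containing 1) possessing a left bounded approximate identity (e_t) consisting of elements with ‖1 − e_t‖ ≤ 1. Then the elements b_t^{1/n} := F(e_t)^{1/n} form a left bounded approximate identity for B consisting of elements with ‖1 − b_t^{1/n}‖ ≤ 1, where F(x) = x(1+x)^{-1}. -/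
/-!
For `0 < s ≤ 1` and `‖1 - x‖ ≤ 1` the binomial series reads `x^s = 1 - ∑ wₖ (1 - x)^(k+1)` with
weights `wₖ = s/(k+1) ∏_{i<k} (1 - s/(i+1)) ≥ 0`, each at most `s`, of total mass `1` (the tail
`∏_{i<n} (1 - s/(i+1)) ≤ exp (-s Hₙ)` tends to `0`). Hence `‖1 - x^s‖ ≤ 1`, and
`x^s = ∑ wₖ (1 - (1 - x)^(k+1))` lies in the closed subalgebra `B` when `x` does.

For `a ∈ B` with `‖1 - a‖ ≤ 1`, `v := 1 - F(a) = (1 + a)⁻¹ = ∑ 2^-(k+1) (1 - a)^k`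
(a Neumann series, as `1 + a = 2 (1 - (1 - a)/2)`), so `‖v‖ ≤ 1` and
`F(a) = ∑ 2^-(k+1) (1 - (1 - a)^k) ∈ B`. The identity `2v = 1 + v(1 - a)` gives
`‖vᵏ b‖ ≤ 2^-k ‖b‖ + ‖(1 - a) b‖`. Summing against the weights,
`‖F(eₜ)^(1/(n+1)) b - b‖ ≤ ‖b‖/(n+1) + ‖(1 - eₜ) b‖`, which tends to `0`.
-/

open Filter

/-- The generalized binomial coefficient `C(t, k) = t(t-1)⋯(t-k+1)/k!`. -/
noncomputable def gbinom (t : ℝ) (k : ℕ) : ℝ :=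
  (∏ i ∈ Finset.range k, (t - i)) / (Nat.factorial k : ℝ)

/-- The `t`-th power of `x` defined by the binomial series
`x^t = Σ_{k≥0} C(t,k)(−1)^k (1−x)^k`. -/
noncomputable def binomPow {A : Type*} [NormedRing A] [NormedSpace ℝ A]
    (x : A) (t : ℝ) : A :=
  ∑' k : ℕ, ((gbinom t k) * (-1 : ℝ) ^ k) • (1 - x) ^ k

/-- The F-transform `F(x) = x (1 + x)⁻¹`. -/
noncomputable def Ftrans {A : Type*} [NormedRing A] (x : A) : A :=
  x * Ring.inverse (1 + x)

open Filter Finset Topology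

noncomputable def binomTail (s : ℝ) (n : ℕ) : ℝ := ∏ i ∈ range n, (1 - s / (i + 1))

noncomputable def binomWeight (s : ℝ) (k : ℕ) : ℝ := s / (k + 1) * binomTail s k

lemma gbinom_zero (t : ℝ) : gbinom t 0 = 1 := by simp [gbinom]

lemma gbinom_succ (t : ℝ) (k : ℕ) : gbinom t (k + 1) = gbinom t k * (t - k) / (k + 1) := by
  simp only [gbinom, prod_range_succ, Nat.factorial_succ, Nat.cast_mul, Nat.cast_succ]
  field_simp

lemma gbinom_succ_mul_neg_one_pow (s : ℝ) (k : ℕ) :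
    gbinom s (k + 1) * (-1) ^ (k + 1) = -binomWeight s k := by
  induction k with
  | zero => simp [gbinom_succ, gbinom_zero, binomWeight, binomTail]
  | succ k ih =>
    rw [gbinom_succ, binomWeight, binomTail, prod_range_succ, ← binomTail]
    rw [binomWeight] at ih
    calc gbinom s (k + 1) * (s - ↑(k + 1)) / (↑(k + 1) + 1) * (-1) ^ (k + 1 + 1)
        = gbinom s (k + 1) * (-1) ^ (k + 1) * ((k + 1 - s) / (k + 1 + 1)) := by
          push_cast; ring
      _ = _ := by rw [ih]; push_cast; field_simp

lemma binomTail_succ (s : ℝ) (n : ℕ) : binomTail s (n + 1) = binomTail s n - binomWeight s n := by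
  rw [binomTail, prod_range_succ, ← binomTail, binomWeight]
  ring

lemma sum_range_binomWeight (s : ℝ) (n : ℕ) :
    ∑ k ∈ range n, binomWeight s k = 1 - binomTail s n := by
  induction n with
  | zero => simp [binomTail]
  | succ n ih => rw [sum_range_succ, ih, binomTail_succ]; ring

lemma div_nat_succ_le_one {s : ℝ} (hs : s ≤ 1) (i : ℕ) : s / (i + 1) ≤ 1 :=
  div_le_one_of_le₀ (by linarith [i.cast_nonneg (α := ℝ)]) (by positivity)

lemma binomTail_nonneg {s : ℝ} (hs : s ≤ 1) (n : ℕ) : 0 ≤ binomTail s n :=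
  prod_nonneg fun i _ => sub_nonneg.2 (div_nat_succ_le_one hs i)

lemma binomTail_le_one {s : ℝ} (hs0 : 0 ≤ s) (hs1 : s ≤ 1) (n : ℕ) : binomTail s n ≤ 1 :=
  prod_le_one (fun i _ => sub_nonneg.2 (div_nat_succ_le_one hs1 i))
    fun i _ => sub_le_self _ (by positivity)

lemma binomWeight_nonneg {s : ℝ} (hs0 : 0 ≤ s) (hs1 : s ≤ 1) (k : ℕ) : 0 ≤ binomWeight s k :=
  mul_nonneg (by positivity) (binomTail_nonneg hs1 k)

lemma binomWeight_le {s : ℝ} (hs0 : 0 ≤ s) (hs1 : s ≤ 1) (k : ℕ) : binomWeight s k ≤ s :=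
  calc binomWeight s k ≤ s * 1 :=
        mul_le_mul (div_le_self hs0 (by linarith [k.cast_nonneg (α := ℝ)]))
          (binomTail_le_one hs0 hs1 k) (binomTail_nonneg hs1 k) hs0
    _ = s := mul_one s

lemma binomTail_le_exp {s : ℝ} (hs : s ≤ 1) (n : ℕ) :
    binomTail s n ≤ Real.exp (-(s * ∑ i ∈ range n, 1 / ((i : ℝ) + 1))) := by
  rw [mul_sum, ← sum_neg_distrib, Real.exp_sum]
  refine prod_le_prod (fun i _ => sub_nonneg.2 (div_nat_succ_le_one hs i)) fun i _ => ?_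
  rw [mul_one_div]
  linarith [Real.add_one_le_exp (-(s / ((i : ℝ) + 1)))]

lemma tendsto_binomTail_atTop {s : ℝ} (hs0 : 0 < s) (hs1 : s ≤ 1) :
    Tendsto (binomTail s) atTop (𝓝 0) :=
  squeeze_zero (binomTail_nonneg hs1) (binomTail_le_exp hs1) <| Real.tendsto_exp_atBot.comp <|
    tendsto_neg_atBot_iff.2 <| Real.tendsto_sum_range_one_div_nat_succ_atTop.const_mul_atTop hs0

lemma hasSum_binomWeight {s : ℝ} (hs0 : 0 < s) (hs1 : s ≤ 1) : HasSum (binomWeight s) 1 := by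
  rw [hasSum_iff_tendsto_nat_of_nonneg (binomWeight_nonneg hs0.le hs1)]
  simpa only [sum_range_binomWeight, sub_zero] using (tendsto_binomTail_atTop hs0 hs1).const_sub 1

lemma hasSum_inv_two_pow_succ : HasSum (fun k : ℕ => (2⁻¹ : ℝ) ^ (k + 1)) 1 := by
  convert hasSum_geometric_two' 1 using 2 with k
  rw [pow_succ, inv_pow]; field_simp

lemma one_sub_one_sub_pow_mem {R S : Type*} [Ring R] [SetLike S R] [NonUnitalSubringClass S R]
    {B : S} {x : R} (hx : x ∈ B) (n : ℕ) : 1 - (1 - x) ^ n ∈ B := by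
  induction n with
  | zero => rw [pow_zero, sub_self]; exact zero_mem B
  | succ n ih =>
    have h : 1 - (1 - x) ^ (n + 1) = (1 - (1 - x) ^ n) + x - (1 - (1 - x) ^ n) * x := by
      rw [pow_succ]; noncomm_ring
    rw [h]
    exact sub_mem (add_mem ih hx) (mul_mem ih hx)

section BinomialPower

variable {A : Type*} [NormedRing A] [NormedAlgebra ℝ A] {s : ℝ} {x : A}

lemma norm_binomWeight_smul_pow_le (hs0 : 0 < s) (hs1 : s ≤ 1) (hx : ‖1 - x‖ ≤ 1) (k : ℕ) :
    ‖binomWeight s k • (1 - x) ^ (k + 1)‖ ≤ binomWeight s k := by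
  rw [norm_smul, Real.norm_of_nonneg (binomWeight_nonneg hs0.le hs1 k)]
  exact mul_le_of_le_one_right (binomWeight_nonneg hs0.le hs1 k)
    ((norm_pow_le' _ k.succ_pos).trans (pow_le_one₀ (norm_nonneg _) hx))

lemma hasSum_one_sub_binomPow [CompleteSpace A] (hs0 : 0 < s) (hs1 : s ≤ 1) (hx : ‖1 - x‖ ≤ 1) :
    HasSum (fun k => binomWeight s k • (1 - x) ^ (k + 1)) (1 - binomPow x s) := by
  have hsum : Summable (fun k => binomWeight s k • (1 - x) ^ (k + 1)) :=
    (hasSum_binomWeight hs0 hs1).summable.of_norm_bounded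
      (norm_binomWeight_smul_pow_le hs0 hs1 hx)
  have hcoeff : (fun k : ℕ => (gbinom s (k + 1) * (-1) ^ (k + 1)) • (1 - x) ^ (k + 1))
      = fun k => -(binomWeight s k • (1 - x) ^ (k + 1)) := by
    funext k
    rw [gbinom_succ_mul_neg_one_pow, neg_smul]
  have htail : HasSum (fun k : ℕ => (gbinom s (k + 1) * (-1) ^ (k + 1)) • (1 - x) ^ (k + 1))
      (-∑' k, binomWeight s k • (1 - x) ^ (k + 1)) := by
    rw [hcoeff]
    exact hsum.hasSum.neg
  have hpow : binomPow x s = 1 - ∑' k, binomWeight s k • (1 - x) ^ (k + 1) := by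
    rw [binomPow, (HasSum.zero_add (f := fun k => (gbinom s k * (-1) ^ k) • (1 - x) ^ k)
      htail).tsum_eq, gbinom_zero, pow_zero, pow_zero, mul_one, one_smul, ← sub_eq_add_neg]
  rw [hpow, sub_sub_cancel]
  exact hsum.hasSum

lemma norm_one_sub_binomPow_le [CompleteSpace A] (hs0 : 0 < s) (hs1 : s ≤ 1)
    (hx : ‖1 - x‖ ≤ 1) : ‖1 - binomPow x s‖ ≤ 1 :=
  (hasSum_one_sub_binomPow hs0 hs1 hx).norm_le_of_bounded (hasSum_binomWeight hs0 hs1)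
    (norm_binomWeight_smul_pow_le hs0 hs1 hx)

lemma binomPow_mem [CompleteSpace A] {S : Type*} [SetLike S A] [NonUnitalSubringClass S A]
    [SMulMemClass S ℝ A] {B : S} (hB : IsClosed (B : Set A)) (hs0 : 0 < s) (hs1 : s ≤ 1)
    (hxB : x ∈ B) (hx : ‖1 - x‖ ≤ 1) : binomPow x s ∈ B := by
  have h : HasSum (fun k => binomWeight s k • (1 - (1 - x) ^ (k + 1))) (binomPow x s) := by
    simpa only [smul_sub, one_smul, sub_sub_cancel] using
      ((hasSum_binomWeight hs0 hs1).smul_const (1 : A)).sub (hasSum_one_sub_binomPow hs0 hs1 hx)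
  rw [← h.tsum_eq]
  exact tsum_mem hB fun k => SMulMemClass.smul_mem _ (one_sub_one_sub_pow_mem hxB _)

lemma norm_binomPow_mul_sub_le [CompleteSpace A] (hs0 : 0 < s) (hs1 : s ≤ 1) (hx : ‖1 - x‖ ≤ 1)
    {b : A} {E : ℝ} (hb : ∀ k : ℕ, ‖(1 - x) ^ (k + 1) * b‖ ≤ (2⁻¹ : ℝ) ^ (k + 1) * ‖b‖ + E) :
    ‖binomPow x s * b - b‖ ≤ s * ‖b‖ + E := by
  have h : HasSum (fun k => binomWeight s k • ((1 - x) ^ (k + 1) * b)) (b - binomPow x s * b) := by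
    simpa only [smul_mul_assoc, sub_mul, one_mul] using
      (hasSum_one_sub_binomPow hs0 hs1 hx).mul_right b
  have hbound : HasSum (fun k => s * ‖b‖ * (2⁻¹ : ℝ) ^ (k + 1) + E * binomWeight s k)
      (s * ‖b‖ + E) := by
    simpa only [mul_one] using
      (hasSum_inv_two_pow_succ.mul_left (s * ‖b‖)).add ((hasSum_binomWeight hs0 hs1).mul_left E)
  rw [norm_sub_rev]
  refine h.norm_le_of_bounded hbound fun k => ?_
  have hw := binomWeight_nonneg hs0.le hs1 k
  rw [norm_smul, Real.norm_of_nonneg hw]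
  calc binomWeight s k * ‖(1 - x) ^ (k + 1) * b‖
      ≤ binomWeight s k * ((2⁻¹ : ℝ) ^ (k + 1) * ‖b‖ + E) := mul_le_mul_of_nonneg_left (hb k) hw
    _ = binomWeight s k * ‖b‖ * (2⁻¹ : ℝ) ^ (k + 1) + E * binomWeight s k := by ring
    _ ≤ s * ‖b‖ * (2⁻¹ : ℝ) ^ (k + 1) + E * binomWeight s k := by
      gcongr
      exact binomWeight_le hs0.le hs1 k

end BinomialPower

section Ftransform

variable {A : Type*} [NormedRing A] {a : A}

lemma one_sub_Ftrans (h : IsUnit (1 + a)) : 1 - Ftrans a = Ring.inverse (1 + a) :=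
  calc 1 - Ftrans a = (1 + a) * Ring.inverse (1 + a) - a * Ring.inverse (1 + a) := by
        rw [Ring.mul_inverse_cancel _ h, Ftrans]
    _ = Ring.inverse (1 + a) := by noncomm_ring

variable [NormedAlgebra ℝ A]

lemma norm_pow_mul_le_of_mul_one_add_eq_one {v : A} (hv : ‖v‖ ≤ 1) (hva : v * (1 + a) = 1)
    (b : A) (k : ℕ) : ‖v ^ k * b‖ ≤ (2⁻¹ : ℝ) ^ k * ‖b‖ + ‖(1 - a) * b‖ := by
  induction k with
  | zero => simp
  | succ k ih =>
    have hrec : (2 : ℝ) • (v ^ (k + 1) * b) = v ^ k * b + v ^ (k + 1) * ((1 - a) * b) := by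
      calc (2 : ℝ) • (v ^ (k + 1) * b)
          = v ^ k * ((v * (1 + a)) * b) + v ^ (k + 1) * ((1 - a) * b) := by
            simp only [two_smul, pow_succ, mul_add, add_mul, mul_sub, sub_mul, mul_one, one_mul,
              mul_assoc]
            abel
        _ = v ^ k * b + v ^ (k + 1) * ((1 - a) * b) := by rw [hva, one_mul]
    have hvk : ‖v ^ (k + 1)‖ ≤ 1 :=
      (norm_pow_le' v k.succ_pos).trans (pow_le_one₀ (norm_nonneg v) hv)
    have h2 : 2 * ‖v ^ (k + 1) * b‖ ≤ ‖v ^ k * b‖ + ‖(1 - a) * b‖ := by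
      calc 2 * ‖v ^ (k + 1) * b‖ = ‖(2 : ℝ) • (v ^ (k + 1) * b)‖ := by
            rw [norm_smul, Real.norm_two]
        _ ≤ ‖v ^ k * b‖ + ‖v ^ (k + 1)‖ * ‖(1 - a) * b‖ := by
            rw [hrec]
            exact (norm_add_le _ _).trans (by gcongr; exact norm_mul_le _ _)
        _ ≤ ‖v ^ k * b‖ + ‖(1 - a) * b‖ := by
            gcongr
            exact mul_le_of_le_one_left (norm_nonneg _) hvk
    have hpow : (2⁻¹ : ℝ) ^ (k + 1) * ‖b‖ = 2⁻¹ * ((2⁻¹ : ℝ) ^ k * ‖b‖) := by ring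
    linarith

lemma isUnit_one_add_and_hasSum_inverse [CompleteSpace A] (ha : ‖1 - a‖ ≤ 1) :
    IsUnit (1 + a) ∧
      HasSum (fun k => (2⁻¹ : ℝ) ^ (k + 1) • (1 - a) ^ k) (Ring.inverse (1 + a)) := by
  set t : A := (2⁻¹ : ℝ) • (1 - a)
  have ht : ‖t‖ < 1 := by
    rw [norm_smul, norm_inv, Real.norm_two]
    linarith
  have hunit : IsUnit (1 - t) := (Units.oneSub t ht).isUnit
  have h2 : 1 + a = (2 : ℝ) • (1 - t) := by
    rw [smul_sub, smul_smul, mul_inv_cancel₀ two_ne_zero, one_smul, two_smul]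
    abel
  set w : A := (2⁻¹ : ℝ) • Ring.inverse (1 - t)
  let U : Aˣ := ⟨1 + a, w,
    by rw [h2, smul_mul_smul_comm, Ring.mul_inverse_cancel _ hunit]; norm_num,
    by rw [h2, smul_mul_smul_comm, Ring.inverse_mul_cancel _ hunit]; norm_num⟩
  refine ⟨U.isUnit, ?_⟩
  rw [show Ring.inverse (1 + a) = w from Ring.inverse_unit U]
  have := (hasSum_geom_series_inverse t ht).const_smul (2⁻¹ : ℝ)
  simpa only [t, smul_pow, smul_smul, ← pow_succ'] using this

lemma hasSum_one_sub_Ftrans [CompleteSpace A] (ha : ‖1 - a‖ ≤ 1) :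
    HasSum (fun k => (2⁻¹ : ℝ) ^ (k + 1) • (1 - a) ^ k) (1 - Ftrans a) := by
  obtain ⟨hunit, hsum⟩ := isUnit_one_add_and_hasSum_inverse ha
  rwa [one_sub_Ftrans hunit]

lemma norm_one_sub_Ftrans_le [NormOneClass A] [CompleteSpace A] (ha : ‖1 - a‖ ≤ 1) :
    ‖1 - Ftrans a‖ ≤ 1 :=
  (hasSum_one_sub_Ftrans ha).norm_le_of_bounded hasSum_inv_two_pow_succ fun k => by
    rw [norm_smul, Real.norm_of_nonneg (by positivity)]
    exact mul_le_of_le_one_right (by positivity)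
      ((norm_pow_le _ k).trans (pow_le_one₀ (norm_nonneg _) ha))

lemma Ftrans_mem [CompleteSpace A] {S : Type*} [SetLike S A] [NonUnitalSubringClass S A]
    [SMulMemClass S ℝ A] {B : S} (hB : IsClosed (B : Set A)) (haB : a ∈ B) (ha : ‖1 - a‖ ≤ 1) :
    Ftrans a ∈ B := by
  have h : HasSum (fun k => (2⁻¹ : ℝ) ^ (k + 1) • (1 - (1 - a) ^ k)) (Ftrans a) := by
    simpa only [smul_sub, one_smul, sub_sub_cancel] using
      (hasSum_inv_two_pow_succ.smul_const (1 : A)).sub (hasSum_one_sub_Ftrans ha)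
  rw [← h.tsum_eq]
  exact tsum_mem hB fun k => SMulMemClass.smul_mem _ (one_sub_one_sub_pow_mem haB _)

lemma norm_one_sub_Ftrans_pow_mul_le [NormOneClass A] [CompleteSpace A] (ha : ‖1 - a‖ ≤ 1)
    (b : A) (k : ℕ) : ‖(1 - Ftrans a) ^ k * b‖ ≤ (2⁻¹ : ℝ) ^ k * ‖b‖ + ‖(1 - a) * b‖ := by
  obtain ⟨hunit, -⟩ := isUnit_one_add_and_hasSum_inverse ha
  refine norm_pow_mul_le_of_mul_one_add_eq_one (norm_one_sub_Ftrans_le ha) ?_ b k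
  rw [one_sub_Ftrans hunit, Ring.inverse_mul_cancel _ hunit]

end Ftransform

theorem Ftransform_roots_left_bai_general
    {A : Type*} [NormedRing A] [NormedAlgebra ℂ A] [NormOneClass A] [CompleteSpace A]
    (B : NonUnitalSubalgebra ℂ A) (hBc : IsClosed (B : Set A))
    {ι : Type*} [SemilatticeSup ι]
    (e : ι → A) (heB : ∀ t, e t ∈ B) (heF : ∀ t, ‖1 - e t‖ ≤ 1)
    (hlb : ∀ b ∈ B, Tendsto (fun t => e t * b) atTop (nhds b)) :
    (∀ (t : ι) (n : ℕ),
        binomPow (Ftrans (e t)) (1 / ((n : ℝ) + 1)) ∈ B ∧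
        ‖1 - binomPow (Ftrans (e t)) (1 / ((n : ℝ) + 1))‖ ≤ 1) ∧
    (∀ b ∈ B, Tendsto
        (fun p : ι × ℕ => binomPow (Ftrans (e p.1)) (1 / ((p.2 : ℝ) + 1)) * b)
        atTop (nhds b)) := by
  have := SMulMemClass.ofIsScalarTower (NonUnitalSubalgebra ℂ A) ℝ ℂ A
  have hs0 (n : ℕ) : 0 < 1 / ((n : ℝ) + 1) := by positivity
  have hs1 (n : ℕ) : 1 / ((n : ℝ) + 1) ≤ 1 := div_nat_succ_le_one le_rfl n
  have hF (t : ι) : ‖1 - Ftrans (e t)‖ ≤ 1 := norm_one_sub_Ftrans_le (heF t)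
  refine ⟨fun t n => ⟨binomPow_mem hBc (hs0 n) (hs1 n) (Ftrans_mem hBc (heB t) (heF t)) (hF t),
    norm_one_sub_binomPow_le (hs0 n) (hs1 n) (hF t)⟩, fun b hb => ?_⟩
  have he : Tendsto (fun t => ‖(1 - e t) * b‖) atTop (𝓝 0) := by
    simpa only [sub_mul, one_mul, norm_sub_rev] using
      tendsto_iff_norm_sub_tendsto_zero.1 (hlb b hb)
  rw [tendsto_iff_norm_sub_tendsto_zero, ← prod_atTop_atTop_eq]
  refine squeeze_zero (fun _ => norm_nonneg _) (fun p => norm_binomPow_mul_sub_le (hs0 p.2)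
    (hs1 p.2) (hF p.1) fun k => norm_one_sub_Ftrans_pow_mul_le (heF p.1) b (k + 1)) ?_
  simpa using ((tendsto_one_div_add_atTop_nhds_zero_nat.comp tendsto_snd).mul_const ‖b‖).add
    (he.comp tendsto_fst)

/-- Let `A` be a unital Banach algebra and `B` a closed subalgebra not
containing `1`, possessing a left bounded approximate identity `(e t)` with
`‖1 − e t‖ ≤ 1`.  Then the elements `F(e t)^{1/n}` form a left bounded approximate
identity for `B` consisting of elements with `‖1 − F(e t)^{1/n}‖ ≤ 1`, where
`F(x) = x(1+x)⁻¹`. -/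
theorem Ftransform_roots_left_bai
    {A : Type*} [NormedRing A] [NormedAlgebra ℂ A] [NormOneClass A] [CompleteSpace A]
    (B : NonUnitalSubalgebra ℂ A) (hBc : IsClosed (B : Set A)) (h1 : (1 : A) ∉ B)
    {ι : Type*} [Nonempty ι] [SemilatticeSup ι]
    (e : ι → A) (heB : ∀ t, e t ∈ B) (heF : ∀ t, ‖1 - e t‖ ≤ 1)
    (hlb : ∀ b ∈ B, Tendsto (fun t => e t * b) atTop (nhds b)) :
    (∀ (t : ι) (n : ℕ),
        binomPow (Ftrans (e t)) (1 / ((n : ℝ) + 1)) ∈ B ∧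
        ‖1 - binomPow (Ftrans (e t)) (1 / ((n : ℝ) + 1))‖ ≤ 1) ∧
    (∀ b ∈ B, Tendsto
        (fun p : ι × ℕ => binomPow (Ftrans (e p.1)) (1 / ((p.2 : ℝ) + 1)) * b)
        atTop (nhds b)) :=
  Ftransform_roots_left_bai_general B hBc e heB heF hlb
end

section
/- Let A be a unital Banach algebra and J a closed right ideal with a left bounded approximate identity consisting of elements z with ‖1 − z‖ ≤ 1. If J is algebraically countably generated as a right A-module, then J = qA for an idempotent q with ‖1 − q‖ ≤ 1. -/
/-!
Rescale the generators so that `‖x k‖ ≤ 2⁻¹ ^ k`. A Cohen-type factorization,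
`Z (n + 1) = Z n - 2⁻¹ ^ (n + 1) • (1 - e tₙ)` with `Z 0 = 1`, keeps `‖1 - Z n‖ ≤ 1 - 2⁻¹ ^ n`
(so `‖(Z n)⁻¹‖ ≤ 2 ^ n`) and, for a suitable `tₙ`, makes `(Z n)⁻¹ * x k` converge. In the limit
`z = lim Z n ∈ J`, `‖1 - z‖ ≤ 1`, and every generator lies in `z A`, hence `J = z A`.

Since `‖1 - z‖ ≤ 1`, `z + τ` is invertible with `‖(z + τ)⁻¹‖ ≤ τ⁻¹` for `τ > 0`, and
`q τ = z (z + τ)⁻¹` satisfies `‖1 - q τ‖ ≤ 1` and `(1 - q τ) z a = τ q τ a`. The open mapping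
theorem for `a ↦ z a : A → J` makes `1 - q τ` tend to `0` uniformly on bounded subsets of `J`,
so `q τ` converges as `τ → 0` to an idempotent `q` that fixes `J`, and `J = q A`.
-/

open Filter Topology
open scoped Ring

section Neumann

variable {A : Type*} [NormedRing A]

theorem norm_le_two_of_norm_one_sub_le_one [NormOneClass A] {q : A} (hq : ‖1 - q‖ ≤ 1) :
    ‖q‖ ≤ 2 := by
  calc ‖q‖ = ‖1 - (1 - q)‖ := by rw [sub_sub_cancel]
    _ ≤ ‖(1 : A)‖ + ‖1 - q‖ := norm_sub_le _ _
    _ ≤ 2 := by rw [norm_one]; linarith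

variable [HasSummableGeomSeries A]

theorem inverse_one_sub_mul_mem {S : Type*} [SetLike S A] [AddSubmonoidClass S A] {s : S}
    (hs : IsClosed (s : Set A)) {t y : A} (ht : ‖t‖ < 1) (hts : ∀ y ∈ s, t * y ∈ s)
    (hy : y ∈ s) : (1 - t)⁻¹ʳ * y ∈ s := by
  have hpow : ∀ i : ℕ, t ^ i * y ∈ s := fun i ↦ by
    induction i with
    | zero => simpa using hy
    | succ i ih => simpa [pow_succ', mul_assoc] using hts _ ih
  rw [← ((hasSum_geom_series_inverse t ht).mul_right y).tsum_eq]
  exact tsum_mem hs hpow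

variable [NormOneClass A]

theorem norm_inverse_one_sub_le {t : A} (ht : ‖t‖ < 1) : ‖(1 - t)⁻¹ʳ‖ ≤ (1 - ‖t‖)⁻¹ := by
  simpa [← geom_series_eq_inverse t ht] using tsum_geometric_le_of_norm_lt_one t ht

variable [NormedAlgebra ℝ A]

theorem isUnit_and_norm_inverse_le {w : A} {c r : ℝ} (h : ‖c • (1 : A) - w‖ ≤ r)
    (hrc : r < c) : IsUnit w ∧ ‖w⁻¹ʳ‖ ≤ (c - r)⁻¹ := by
  have hc : 0 < c := (norm_nonneg _).trans h |>.trans_lt hrc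
  set t : A := c⁻¹ • (c • (1 : A) - w)
  have htr : ‖t‖ ≤ r / c := by
    rw [norm_smul, Real.norm_of_nonneg (inv_nonneg.mpr hc.le), inv_mul_eq_div]
    gcongr
  have ht : ‖t‖ < 1 := htr.trans_lt ((div_lt_one hc).mpr hrc)
  have hw : w = c • (1 - t) := by
    rw [smul_sub, smul_smul, mul_inv_cancel₀ hc.ne', one_smul, sub_sub_cancel]
  have hunit : IsUnit (1 - t) := isUnit_one_sub_of_norm_lt_one ht
  have hwu : IsUnit w := hw ▸ hunit.smul (Units.mk0 c hc.ne')
  have hinv : w⁻¹ʳ = c⁻¹ • (1 - t)⁻¹ʳ := by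
    have hmul : w * (c⁻¹ • (1 - t)⁻¹ʳ) = 1 := by
      rw [hw, smul_mul_smul_comm, mul_inv_cancel₀ hc.ne', Ring.mul_inverse_cancel _ hunit,
        one_smul]
    rw [← Ring.inverse_mul_cancel_left w (c⁻¹ • (1 - t)⁻¹ʳ) hwu, hmul, mul_one]
  refine ⟨hwu, ?_⟩
  calc ‖w⁻¹ʳ‖ ≤ c⁻¹ * (1 - ‖t‖)⁻¹ := by
        rw [hinv, norm_smul, Real.norm_of_nonneg (inv_nonneg.mpr hc.le)]
        gcongr
        exact norm_inverse_one_sub_le ht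
    _ ≤ c⁻¹ * (1 - r / c)⁻¹ := by
        gcongr
        linarith [(div_lt_one hc).mpr hrc]
    _ = (c - r)⁻¹ := by
        field_simp

end Neumann

theorem Commute.ringInverse_right {M₀ : Type*} [MonoidWithZero M₀] {a b : M₀}
    (h : Commute a b) : Commute a b⁻¹ʳ := by
  by_cases hb : IsUnit b
  · obtain ⟨u, rfl⟩ := hb
    rw [Ring.inverse_unit]
    exact h.units_inv_right
  · rw [Ring.inverse_non_unit b hb]
    exact Commute.zero_right a

theorem cauchySeq_of_norm_sub_mul_le {A : Type*} [NormedRing A] {q : ℕ → A}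
    (hcomm : ∀ m n, Commute (q m) (q n)) {ε : ℕ → ℝ} (hε : Tendsto ε atTop (𝓝 0))
    (hq : ∀ m n, ‖q m - q n * q m‖ ≤ ε n) : CauchySeq q := by
  refine Metric.cauchySeq_iff'.mpr fun δ hδ ↦ ?_
  obtain ⟨N, hN⟩ := eventually_atTop.mp (hε.eventually (gt_mem_nhds (half_pos hδ)))
  refine ⟨N, fun n hn ↦ ?_⟩
  have hsplit : q n - q N = (q n - q N * q n) - (q N - q n * q N) := by
    rw [(hcomm N n).eq]; abel
  calc dist (q n) (q N) = ‖(q n - q N * q n) - (q N - q n * q N)‖ := by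
        rw [dist_eq_norm, hsplit]
    _ ≤ ε N + ε n := (norm_sub_le _ _).trans (add_le_add (hq n N) (hq N n))
    _ < δ / 2 + δ / 2 := add_lt_add (hN N le_rfl) (hN n hn)
    _ = δ := add_halves δ

theorem exists_forall_norm_one_sub_mul_le {A : Type*} [NormedRing A] {ι : Type*} [Nonempty ι]
    [SemilatticeSup ι] {e : ι → A} {κ : Type*} {s : Finset κ} {y : κ → A}
    (hs : ∀ k ∈ s, Tendsto (fun i ↦ e i * y k) atTop (𝓝 (y k))) {δ : ℝ} (hδ : 0 < δ) :
    ∃ i, ∀ k ∈ s, ‖(1 - e i) * y k‖ ≤ δ := by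
  have h : ∀ᶠ i in atTop, ∀ k ∈ s, ‖(1 - e i) * y k‖ ≤ δ := by
    rw [eventually_all_finset]
    intro k hk
    filter_upwards [hs k hk (Metric.closedBall_mem_nhds (y k) hδ)] with i hi
    rwa [sub_mul, one_mul, ← norm_neg, neg_sub, ← dist_eq_norm]
  exact h.exists

section Cohen

variable {A : Type*} [NormedRing A] [NormedAlgebra ℝ A] {ι : Type*} [Nonempty ι]

/- The index makes `e` almost fix `w⁻¹ * Y k` for `k < 2 * n + 2`; the later generators need no
care, since for `w = cohenSeq e Y n` we have `‖w⁻¹‖ * ‖Y k‖ ≤ 2 ^ n * 2⁻¹ ^ k`. If no such index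
exists, `Classical.epsilon` returns an arbitrary one. -/
noncomputable def cohenIndex (e : ι → A) (Y : ℕ → A) (n : ℕ) (w : A) : ι :=
  Classical.epsilon fun i ↦ ∀ k < 2 * n + 2, ‖(1 - e i) * (w⁻¹ʳ * Y k)‖ ≤ 2⁻¹ ^ n

noncomputable def cohenSeq (e : ι → A) (Y : ℕ → A) : ℕ → A
  | 0 => 1
  | n + 1 =>
    cohenSeq e Y n - (2⁻¹ : ℝ) ^ (n + 1) • (1 - e (cohenIndex e Y n (cohenSeq e Y n)))

variable {e : ι → A} {Y : ℕ → A}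

theorem cohenSeq_sub_cohenSeq_succ (n : ℕ) :
    cohenSeq e Y n - cohenSeq e Y (n + 1) =
      (2⁻¹ : ℝ) ^ (n + 1) • (1 - e (cohenIndex e Y n (cohenSeq e Y n))) := by
  rw [cohenSeq, sub_sub_cancel]

theorem norm_cohenSeq_sub_cohenSeq_succ_le (heF : ∀ i, ‖1 - e i‖ ≤ 1) (n : ℕ) :
    ‖cohenSeq e Y n - cohenSeq e Y (n + 1)‖ ≤ 2⁻¹ ^ (n + 1) := by
  rw [cohenSeq_sub_cohenSeq_succ, norm_smul, Real.norm_of_nonneg (by positivity)]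
  exact mul_le_of_le_one_right (by positivity) (heF _)

theorem norm_one_sub_cohenSeq_le (heF : ∀ i, ‖1 - e i‖ ≤ 1) (n : ℕ) :
    ‖1 - cohenSeq e Y n‖ ≤ 1 - 2⁻¹ ^ n := by
  induction n with
  | zero => simp [cohenSeq]
  | succ n ih =>
    calc ‖1 - cohenSeq e Y (n + 1)‖
        = ‖(1 - cohenSeq e Y n) + (cohenSeq e Y n - cohenSeq e Y (n + 1))‖ := by
          rw [sub_add_sub_cancel]
      _ ≤ (1 - 2⁻¹ ^ n) + 2⁻¹ ^ (n + 1) :=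
          (norm_add_le _ _).trans (add_le_add ih (norm_cohenSeq_sub_cohenSeq_succ_le heF n))
      _ = 1 - 2⁻¹ ^ (n + 1) := by ring

theorem cohenSeq_sub_smul_one_mem {J : Submodule ℝ A} (heJ : ∀ i, e i ∈ J) (n : ℕ) :
    cohenSeq e Y n - (2⁻¹ : ℝ) ^ n • 1 ∈ J := by
  induction n with
  | zero => simp [cohenSeq]
  | succ n ih =>
    have h : cohenSeq e Y (n + 1) - (2⁻¹ : ℝ) ^ (n + 1) • 1
        = (cohenSeq e Y n - (2⁻¹ : ℝ) ^ n • 1)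
          + (2⁻¹ : ℝ) ^ (n + 1) • e (cohenIndex e Y n (cohenSeq e Y n)) := by
      rw [cohenSeq, pow_succ]
      module
    rw [h]
    exact J.add_mem ih (J.smul_mem _ (heJ _))

variable [CompleteSpace A]

theorem inverse_cohenSeq_mul_mem {J : Submodule ℝ A} (hJc : IsClosed (J : Set A))
    (hJr : ∀ x ∈ J, ∀ a : A, x * a ∈ J) (heJ : ∀ i, e i ∈ J) (heF : ∀ i, ‖1 - e i‖ ≤ 1)
    (n : ℕ) {y : A} (hy : y ∈ J) : (cohenSeq e Y n)⁻¹ʳ * y ∈ J := by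
  have hsub : ∀ y ∈ J, (1 - cohenSeq e Y n) * y ∈ J := by
    intro y hy
    have h : (1 - cohenSeq e Y n) * y
        = (1 - (2⁻¹ : ℝ) ^ n) • y - (cohenSeq e Y n - (2⁻¹ : ℝ) ^ n • 1) * y := by
      rw [sub_mul, sub_mul, sub_smul, one_mul, one_smul, smul_one_mul]
      abel
    rw [h]
    exact J.sub_mem (J.smul_mem _ hy) (hJr _ (cohenSeq_sub_smul_one_mem heJ n) y)
  have hnorm : ‖1 - cohenSeq e Y n‖ < 1 :=
    (norm_one_sub_cohenSeq_le heF n).trans_lt (sub_lt_self 1 (by positivity))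
  simpa using inverse_one_sub_mul_mem hJc hnorm hsub hy

variable [NormOneClass A]

theorem isUnit_cohenSeq_and_norm_inverse_le (heF : ∀ i, ‖1 - e i‖ ≤ 1) (n : ℕ) :
    IsUnit (cohenSeq e Y n) ∧ ‖(cohenSeq e Y n)⁻¹ʳ‖ ≤ 2 ^ n := by
  simpa using isUnit_and_norm_inverse_le (w := cohenSeq e Y n) (c := 1) (r := 1 - 2⁻¹ ^ n)
    (by rw [one_smul]; exact norm_one_sub_cohenSeq_le heF n) (by simp)

theorem norm_one_sub_cohenIndex_mul_le [SemilatticeSup ι] {J : Submodule ℝ A}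
    (hJc : IsClosed (J : Set A)) (hJr : ∀ x ∈ J, ∀ a : A, x * a ∈ J) (heJ : ∀ i, e i ∈ J)
    (heF : ∀ i, ‖1 - e i‖ ≤ 1) (hlb : ∀ x ∈ J, Tendsto (fun i ↦ e i * x) atTop (𝓝 x))
    (hYJ : ∀ k, Y k ∈ J) (hY : ∀ k, ‖Y k‖ ≤ 2⁻¹ ^ k) (n k : ℕ) :
    ‖(1 - e (cohenIndex e Y n (cohenSeq e Y n))) * ((cohenSeq e Y n)⁻¹ʳ * Y k)‖ ≤ 2⁻¹ ^ n := by
  rcases lt_or_ge k (2 * n + 2) with hk | hk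
  · have hex : ∃ i, ∀ k < 2 * n + 2, ‖(1 - e i) * ((cohenSeq e Y n)⁻¹ʳ * Y k)‖ ≤ 2⁻¹ ^ n := by
      obtain ⟨i, hi⟩ := exists_forall_norm_one_sub_mul_le (s := Finset.range (2 * n + 2))
        (fun k _ ↦ hlb _ (inverse_cohenSeq_mul_mem hJc hJr heJ heF n (hYJ k)))
        (by positivity : (0 : ℝ) < 2⁻¹ ^ n)
      exact ⟨i, fun k hk ↦ hi k (Finset.mem_range.mpr hk)⟩
    exact Classical.epsilon_spec hex k hk
  · calc _ ≤ ‖1 - e (cohenIndex e Y n (cohenSeq e Y n))‖ * (‖(cohenSeq e Y n)⁻¹ʳ‖ * ‖Y k‖) :=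
          (norm_mul_le _ _).trans (by gcongr; exact norm_mul_le _ _)
      _ ≤ 1 * (2 ^ n * 2⁻¹ ^ (2 * n + 2)) := by
          gcongr
          · exact heF _
          · exact (isUnit_cohenSeq_and_norm_inverse_le heF n).2
          · exact (hY k).trans (pow_le_pow_of_le_one (by norm_num) (by norm_num) hk)
      _ = (2⁻¹ : ℝ) ^ (n + 2) := by
          rw [one_mul, show 2 * n + 2 = n + (n + 2) by ring, pow_add, ← mul_assoc, ← mul_pow,
            mul_inv_cancel₀ two_ne_zero, one_pow, one_mul]
      _ ≤ 2⁻¹ ^ n := pow_le_pow_of_le_one (by norm_num) (by norm_num) (by omega)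

theorem norm_inverse_cohenSeq_succ_mul_sub_le [SemilatticeSup ι] {J : Submodule ℝ A}
    (hJc : IsClosed (J : Set A)) (hJr : ∀ x ∈ J, ∀ a : A, x * a ∈ J) (heJ : ∀ i, e i ∈ J)
    (heF : ∀ i, ‖1 - e i‖ ≤ 1) (hlb : ∀ x ∈ J, Tendsto (fun i ↦ e i * x) atTop (𝓝 x))
    (hYJ : ∀ k, Y k ∈ J) (hY : ∀ k, ‖Y k‖ ≤ 2⁻¹ ^ k) (n k : ℕ) :
    ‖(cohenSeq e Y (n + 1))⁻¹ʳ * Y k - (cohenSeq e Y n)⁻¹ʳ * Y k‖ ≤ 2⁻¹ ^ n := by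
  obtain ⟨hu, hR⟩ := isUnit_cohenSeq_and_norm_inverse_le (Y := Y) heF (n + 1)
  rw [← sub_mul, Ring.inverse_sub_inverse (iff_of_true hu
      (isUnit_cohenSeq_and_norm_inverse_le heF n).1), cohenSeq_sub_cohenSeq_succ, mul_assoc,
    mul_assoc, smul_mul_assoc, mul_smul_comm, norm_smul, Real.norm_of_nonneg (by positivity)]
  have hstep := norm_one_sub_cohenIndex_mul_le hJc hJr heJ heF hlb hYJ hY n k
  calc _ ≤ (2⁻¹ : ℝ) ^ (n + 1) * (2 ^ (n + 1) * 2⁻¹ ^ n) := by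
        gcongr
        exact (norm_mul_le _ _).trans (mul_le_mul hR hstep (norm_nonneg _) (by positivity))
    _ = 2⁻¹ ^ n := by
        rw [← mul_assoc, ← mul_pow, inv_mul_cancel₀ two_ne_zero, one_pow, one_mul]

theorem exists_common_left_factor_of_norm_le [SemilatticeSup ι] {J : Submodule ℝ A}
    (hJc : IsClosed (J : Set A)) (hJr : ∀ x ∈ J, ∀ a : A, x * a ∈ J) (heJ : ∀ i, e i ∈ J)
    (heF : ∀ i, ‖1 - e i‖ ≤ 1) (hlb : ∀ x ∈ J, Tendsto (fun i ↦ e i * x) atTop (𝓝 x))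
    (hYJ : ∀ k, Y k ∈ J) (hY : ∀ k, ‖Y k‖ ≤ 2⁻¹ ^ k) :
    ∃ z ∈ J, ‖1 - z‖ ≤ 1 ∧ ∀ k, ∃ b, Y k = z * b := by
  obtain ⟨z, hz⟩ := cauchySeq_tendsto_of_complete <|
    cauchySeq_of_le_geometric (f := cohenSeq e Y) 2⁻¹ 2⁻¹ (by norm_num) fun n ↦ by
      rw [dist_eq_norm, ← pow_succ']; exact norm_cohenSeq_sub_cohenSeq_succ_le heF n
  have hb : ∀ k, ∃ b, Tendsto (fun n ↦ (cohenSeq e Y n)⁻¹ʳ * Y k) atTop (𝓝 b) := fun k ↦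
    cauchySeq_tendsto_of_complete <| cauchySeq_of_le_geometric 2⁻¹ 1 (by norm_num) fun n ↦ by
      rw [dist_eq_norm, norm_sub_rev, one_mul]
      exact norm_inverse_cohenSeq_succ_mul_sub_le hJc hJr heJ heF hlb hYJ hY n k
  choose b hb using hb
  refine ⟨z, ?_, ?_, fun k ↦ ⟨b k, ?_⟩⟩
  · have h := hz.sub ((tendsto_pow_atTop_nhds_zero_of_lt_one (r := (2⁻¹ : ℝ)) (by norm_num)
      (by norm_num)).smul_const (1 : A))
    rw [zero_smul, sub_zero] at h
    exact hJc.mem_of_tendsto h (.of_forall (cohenSeq_sub_smul_one_mem heJ))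
  · exact le_of_tendsto (tendsto_const_nhds.sub hz).norm (.of_forall fun n ↦
      (norm_one_sub_cohenSeq_le heF n).trans (sub_le_self 1 (by positivity)))
  · have h := hz.mul (hb k)
    have hcancel : ∀ n, cohenSeq e Y n * ((cohenSeq e Y n)⁻¹ʳ * Y k) = Y k := fun n ↦
      Ring.mul_inverse_cancel_left _ _ (isUnit_cohenSeq_and_norm_inverse_le heF n).1
    simp only [hcancel] at h
    exact tendsto_nhds_unique tendsto_const_nhds h

theorem exists_common_left_factor [SemilatticeSup ι] {J : Submodule ℝ A}
    (hJc : IsClosed (J : Set A)) (hJr : ∀ x ∈ J, ∀ a : A, x * a ∈ J) (heJ : ∀ i, e i ∈ J)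
    (heF : ∀ i, ‖1 - e i‖ ≤ 1) (hlb : ∀ x ∈ J, Tendsto (fun i ↦ e i * x) atTop (𝓝 x))
    {x : ℕ → A} (hxJ : ∀ k, x k ∈ J) : ∃ z ∈ J, ‖1 - z‖ ≤ 1 ∧ ∀ k, ∃ b, x k = z * b := by
  set c : ℕ → ℝ := fun k ↦ 2⁻¹ ^ k / (1 + ‖x k‖)
  have hc : ∀ k, 0 < c k := fun k ↦ by positivity
  have hcx : ∀ k, ‖c k • x k‖ ≤ 2⁻¹ ^ k := fun k ↦ by
    rw [norm_smul, Real.norm_of_nonneg (hc k).le, div_mul_eq_mul_div, mul_div_assoc]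
    exact mul_le_of_le_one_right (by positivity) ((div_le_one (by positivity)).mpr (by simp))
  obtain ⟨z, hzJ, hz, hfac⟩ := exists_common_left_factor_of_norm_le hJc hJr heJ heF hlb
    (fun k ↦ J.smul_mem (c k) (hxJ k)) hcx
  refine ⟨z, hzJ, hz, fun k ↦ ?_⟩
  obtain ⟨b, hb⟩ := hfac k
  refine ⟨(c k)⁻¹ • b, ?_⟩
  rw [mul_smul_comm, ← hb, smul_smul, inv_mul_cancel₀ (hc k).ne', one_smul]

end Cohen

section Idempotent

variable {A : Type*} [NormedRing A] [NormedAlgebra ℝ A]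

theorem commute_inverse_add_smul_one (z : A) (τ : ℝ) : Commute z (z + τ • 1)⁻¹ʳ :=
  ((Commute.refl z).add_right ((Commute.one_right z).smul_right τ)).ringInverse_right

theorem commute_mul_inverse_add_smul_one (z : A) (σ τ : ℝ) :
    Commute (z * (z + σ • 1)⁻¹ʳ) (z * (z + τ • 1)⁻¹ʳ) := by
  have hz := commute_inverse_add_smul_one z
  have hzz : Commute (z + σ • 1) (z + τ • 1) :=
    ((Commute.refl z).add_right ((Commute.one_right z).smul_right τ)).add_left
      ((Commute.one_left _).smul_left σ)
  have hRR : Commute (z + σ • 1)⁻¹ʳ (z + τ • 1)⁻¹ʳ :=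
    (hzz.ringInverse_right.symm.ringInverse_right).symm
  exact ((Commute.refl z).mul_right (hz τ)).mul_left ((hz σ).symm.mul_right hRR)

theorem one_sub_mul_inverse_add_smul_one {z : A} {τ : ℝ} (hu : IsUnit (z + τ • 1)) :
    1 - z * (z + τ • 1)⁻¹ʳ = τ • (z + τ • 1)⁻¹ʳ := by
  have h := Ring.mul_inverse_cancel _ hu
  rw [add_mul, smul_one_mul] at h
  exact (eq_sub_of_add_eq' h).symm

theorem exists_norm_le_of_forall_mem_eq_mul [CompleteSpace A] {J : Submodule ℝ A}
    (hJc : IsClosed (J : Set A)) {z : A} (hzJ : ∀ a, z * a ∈ J) (hJz : ∀ w ∈ J, ∃ a, w = z * a) :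
    ∃ C > 0, ∀ w ∈ J, ∃ a, w = z * a ∧ ‖a‖ ≤ C * ‖w‖ := by
  have : CompleteSpace J := hJc.completeSpace_coe
  let L : A →L[ℝ] J := (ContinuousLinearMap.mul ℝ A z).codRestrict J hzJ
  have hL : Function.Surjective L := by
    rintro ⟨w, hw⟩
    obtain ⟨a, rfl⟩ := hJz w hw
    exact ⟨a, rfl⟩
  obtain ⟨C, hC, hpre⟩ := L.exists_preimage_norm_le hL
  refine ⟨C, hC, fun w hw ↦ ?_⟩
  obtain ⟨a, ha, hna⟩ := hpre ⟨w, hw⟩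
  exact ⟨a, congrArg Subtype.val ha.symm, hna⟩

variable [NormOneClass A] [CompleteSpace A] {z : A} {τ : ℝ}

theorem isUnit_and_norm_inverse_add_smul_one_le (hz : ‖1 - z‖ ≤ 1) (hτ : 0 < τ) :
    IsUnit (z + τ • 1) ∧ ‖(z + τ • 1)⁻¹ʳ‖ ≤ τ⁻¹ := by
  have h := isUnit_and_norm_inverse_le (c := 1 + τ) (w := z + τ • 1) (r := 1)
    (by rwa [add_smul, one_smul, add_sub_add_right_eq_sub]) (by linarith)
  rwa [add_sub_cancel_left] at h

theorem norm_one_sub_mul_inverse_add_smul_one_le (hz : ‖1 - z‖ ≤ 1) (hτ : 0 < τ) :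
    ‖1 - z * (z + τ • 1)⁻¹ʳ‖ ≤ 1 := by
  obtain ⟨hu, hR⟩ := isUnit_and_norm_inverse_add_smul_one_le hz hτ
  rw [one_sub_mul_inverse_add_smul_one hu, norm_smul, Real.norm_of_nonneg hτ.le]
  calc τ * ‖(z + τ • 1)⁻¹ʳ‖ ≤ τ * τ⁻¹ := by gcongr
    _ = 1 := mul_inv_cancel₀ hτ.ne'

theorem norm_mul_sub_mul_inverse_add_smul_one_mul_le (hz : ‖1 - z‖ ≤ 1) (hτ : 0 < τ)
    (a : A) : ‖z * a - z * (z + τ • 1)⁻¹ʳ * (z * a)‖ ≤ τ * (2 * ‖a‖) := by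
  set q := z * (z + τ • 1)⁻¹ʳ
  have hu := (isUnit_and_norm_inverse_add_smul_one_le hz hτ).1
  have h1q := norm_one_sub_mul_inverse_add_smul_one_le hz hτ
  have hid : z * a - q * (z * a) = τ • (q * a) := by
    rw [← one_sub_mul, one_sub_mul_inverse_add_smul_one hu, smul_mul_assoc, ← mul_assoc,
      ← (commute_inverse_add_smul_one z τ).eq]
  rw [hid, norm_smul, Real.norm_of_nonneg hτ.le]
  gcongr
  exact (norm_mul_le _ _).trans (by gcongr; exact norm_le_two_of_norm_one_sub_le_one h1q)

theorem exists_idempotent_of_forall_mem_eq_mul {J : Submodule ℝ A} (hJc : IsClosed (J : Set A))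
    (hJr : ∀ x ∈ J, ∀ a : A, x * a ∈ J) (hzJ : z ∈ J) (hz : ‖1 - z‖ ≤ 1)
    (hJz : ∀ w ∈ J, ∃ a, w = z * a) :
    ∃ q : A, q * q = q ∧ ‖1 - q‖ ≤ 1 ∧ (J : Set A) = {w | ∃ a, w = q * a} := by
  obtain ⟨C, hC, hCz⟩ := exists_norm_le_of_forall_mem_eq_mul hJc (hJr z hzJ) hJz
  set q : ℕ → A := fun n ↦ z * (z + (2⁻¹ : ℝ) ^ n • 1)⁻¹ʳ
  have hτ : ∀ n, (0 : ℝ) < 2⁻¹ ^ n := fun n ↦ by positivity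
  have hτ0 : ∀ K : ℝ, Tendsto (fun n : ℕ ↦ (2⁻¹ : ℝ) ^ n * K) atTop (𝓝 0) := fun K ↦ by
    simpa using (tendsto_pow_atTop_nhds_zero_of_lt_one (r := (2⁻¹ : ℝ)) (by norm_num)
      (by norm_num)).mul_const K
  have hqJ : ∀ n, q n ∈ J := fun n ↦ hJr z hzJ _
  have hq1 : ∀ n, ‖1 - q n‖ ≤ 1 := fun n ↦ norm_one_sub_mul_inverse_add_smul_one_le hz (hτ n)
  have hfix : ∀ w ∈ J, Tendsto (fun n ↦ q n * w) atTop (𝓝 w) := by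
    intro w hw
    obtain ⟨a, rfl⟩ := hJz w hw
    rw [tendsto_iff_norm_sub_tendsto_zero]
    refine squeeze_zero (fun n ↦ norm_nonneg _) (fun n ↦ ?_) (hτ0 (2 * ‖a‖))
    rw [norm_sub_rev]
    exact norm_mul_sub_mul_inverse_add_smul_one_mul_le hz (hτ n) a
  -- Uniformity comes from the open mapping theorem: `q m = z * a` with `‖a‖ ≤ 2 * C`.
  have hunif : ∀ m n, ‖q m - q n * q m‖ ≤ 2⁻¹ ^ n * (2 * (C * 2)) := by
    intro m n
    obtain ⟨a, ha, hna⟩ := hCz (q m) (hqJ m)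
    rw [ha]
    refine (norm_mul_sub_mul_inverse_add_smul_one_mul_le hz (hτ n) a).trans ?_
    gcongr
    exact hna.trans (by gcongr; exact norm_le_two_of_norm_one_sub_le_one (hq1 m))
  obtain ⟨p, hp⟩ := cauchySeq_tendsto_of_complete <|
    cauchySeq_of_norm_sub_mul_le (fun m n ↦ commute_mul_inverse_add_smul_one z _ _)
      (hτ0 _) hunif
  have hpJ : p ∈ J := hJc.mem_of_tendsto hp (.of_forall hqJ)
  have hpw : ∀ w ∈ J, p * w = w := fun w hw ↦ tendsto_nhds_unique (hp.mul_const w) (hfix w hw)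
  refine ⟨p, hpw p hpJ, le_of_tendsto (tendsto_const_nhds.sub hp).norm (.of_forall hq1), ?_⟩
  ext w
  exact ⟨fun hw ↦ ⟨w, (hpw w hw).symm⟩, by rintro ⟨a, rfl⟩; exact hJr p hpJ a⟩

end Idempotent

theorem countably_generated_ideal_eq_idempotent_ideal_general
    {A : Type*} [NormedRing A] [NormedAlgebra ℂ A] [NormOneClass A] [CompleteSpace A]
    (J : Submodule ℂ A) (hJc : IsClosed (J : Set A))
    (hJr : ∀ x ∈ J, ∀ a : A, x * a ∈ J)
    {ι : Type*} [Nonempty ι] [SemilatticeSup ι]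
    (e : ι → A) (heJ : ∀ t, e t ∈ J)
    (heF : ∀ t, ‖1 - e t‖ ≤ 1)
    (hlb : ∀ x ∈ J, Tendsto (fun t => e t * x) atTop (nhds x))
    (x : ℕ → A) (hxJ : ∀ k, x k ∈ J)
    (hgen : ∀ y ∈ J, ∃ (n : ℕ) (a : ℕ → A),
      y = ∑ k ∈ Finset.range n, x k * a k) :
    ∃ q : A, q * q = q ∧ ‖1 - q‖ ≤ 1 ∧
      (J : Set A) = {w : A | ∃ a : A, w = q * a} := by
  obtain ⟨z, hzJ, hz, hfac⟩ :=
    exists_common_left_factor (J := J.restrictScalars ℝ) hJc hJr heJ heF hlb hxJ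
  choose b hb using hfac
  have hJz : ∀ w ∈ J, ∃ a, w = z * a := by
    intro w hw
    obtain ⟨n, a, rfl⟩ := hgen w hw
    exact ⟨∑ k ∈ Finset.range n, b k * a k, by simp only [Finset.mul_sum, hb, mul_assoc]⟩
  exact exists_idempotent_of_forall_mem_eq_mul (J := J.restrictScalars ℝ) hJc hJr hzJ hz hJz

/-- Let `A` be a unital Banach algebra and `J` a closed right ideal with
a left bounded approximate identity consisting of elements `z` with `‖1 − z‖ ≤ 1`.  If `J`
is algebraically countably generated as a right `A`-module, then `J = qA` for an idempotent
`q` with `‖1 − q‖ ≤ 1`. -/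
theorem countably_generated_ideal_eq_idempotent_ideal
    {A : Type*} [NormedRing A] [NormedAlgebra ℂ A] [NormOneClass A] [CompleteSpace A]
    (J : Submodule ℂ A) (hJc : IsClosed (J : Set A))
    (hJr : ∀ x ∈ J, ∀ a : A, x * a ∈ J)
    {ι : Type*} [Nonempty ι] [SemilatticeSup ι]
    (e : ι → A) (heJ : ∀ t, e t ∈ J) (hbd : ∃ C : ℝ, ∀ t, ‖e t‖ ≤ C)
    (heF : ∀ t, ‖1 - e t‖ ≤ 1)
    (hlb : ∀ x ∈ J, Tendsto (fun t => e t * x) atTop (nhds x))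
    (x : ℕ → A) (hxJ : ∀ k, x k ∈ J)
    (hgen : ∀ y ∈ J, ∃ (n : ℕ) (a : ℕ → A),
      y = ∑ k ∈ Finset.range n, x k * a k) :
    ∃ q : A, q * q = q ∧ ‖1 - q‖ ≤ 1 ∧
      (J : Set A) = {w : A | ∃ a : A, w = q * a} :=
  countably_generated_ideal_eq_idempotent_ideal_general J hJc hJr e heJ heF hlb x hxJ hgen
end
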